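/- arXiv:1012.0580 — 5 statements merged into one kernel-verified Lean document; each statement's English description precedes it below -/
import Mathlib

section
/- Let g ≥ 2 be an integer, B the g×g matrix with all entries 1, and A a g×g involutive permutation matrix (A² = I) with zero diagonal. Then for every integer m ≥ 1: if m is odd, (B−A)^m = ((θ^{−m}+1)/g)·B − A, and if m is even, (B−A)^m = ((θ^{−m}−1)/g)·B + I, where θ = 1/(g−1). -/
/-!
Because `B` absorbs `A` (`A * B = B * A = B`) and `B * B = g • B`, every power of `B - A` is a
multiple of `B` plus a power of `-A`; following the coefficient of `B` through
`(B - A) ^ (m + 1) = (B - A) ^ m * (B - A)` gives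
`(B - A) ^ m = (((g - 1) ^ m - (-1) ^ m) / g) • B + (-A) ^ m`.
Finally `A * A = 1` makes `(-A) ^ m` equal to `-A` or `1` according to the parity of `m`.
-/

open Matrix

theorem pow_mul_eq_of_mul_eq {M : Type*} [Monoid M] {A B : M} (hAB : A * B = B) (m : ℕ) :
    A ^ m * B = B := by
  induction m with
  | zero => rw [pow_zero, one_mul]
  | succ m ih => rw [pow_succ, mul_assoc, hAB, ih]

theorem pow_sub_eq_smul_add_neg_pow {K R : Type*} [Field K] [Ring R] [Algebra K R]
    {A B : R} {g : K} (hg : g ≠ 0) (hAB : A * B = B) (hBA : B * A = B) (hBB : B * B = g • B)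
    (m : ℕ) : (B - A) ^ m = (((g - 1) ^ m - (-1) ^ m) / g) • B + (-A) ^ m := by
  induction m with
  | zero => simp
  | succ m ih =>
    have hAmB : (-A) ^ m * B = (-1 : K) ^ m • B := by
      rw [← neg_one_smul K A, smul_pow, smul_mul_assoc, pow_mul_eq_of_mul_eq hAB]
    rw [pow_succ, ih, add_mul, mul_sub, smul_mul_assoc, mul_sub, smul_mul_assoc, hBB, hBA, hAmB,
      smul_smul, sub_eq_add_neg ((-1 : K) ^ m • B), ← mul_neg, ← pow_succ]
    match_scalars
    · field_simp
      ring
    · rfl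

theorem neg_pow_of_odd_of_mul_self_eq_one {R : Type*} [Ring R] {A : R} (hA : A * A = 1)
    {m : ℕ} (hm : Odd m) : (-A) ^ m = -A := by
  rw [hm.neg_pow]
  obtain ⟨k, rfl⟩ := hm
  rw [pow_succ, pow_mul, sq, hA, one_pow, one_mul]

theorem neg_pow_of_even_of_mul_self_eq_one {R : Type*} [Ring R] {A : R} (hA : A * A = 1)
    {m : ℕ} (hm : Even m) : (-A) ^ m = 1 := by
  rw [hm.neg_pow]
  obtain ⟨k, rfl⟩ := hm
  rw [← two_mul, pow_mul, sq, hA, one_pow]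

section AllOnes

variable {n R : Type*} [Fintype n] [DecidableEq n] [NonAssocSemiring R]

theorem permMatrix_mul_of_const_one (σ : Equiv.Perm n) :
    σ.permMatrix R * of (fun _ _ : n => (1 : R)) = of fun _ _ => 1 :=
  PEquiv.toMatrix_toPEquiv_mul σ _

theorem of_const_one_mul_permMatrix (σ : Equiv.Perm n) :
    of (fun _ _ : n => (1 : R)) * σ.permMatrix R = of fun _ _ => 1 :=
  PEquiv.mul_toMatrix_toPEquiv _ σ

end AllOnes

theorem of_const_one_mul_self {n R : Type*} [Fintype n] [NonAssocSemiring R] :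
    of (fun _ _ : n => (1 : R)) * of (fun _ _ => 1) = (Fintype.card n : R) • of fun _ _ => 1 := by
  ext i j
  simp [mul_apply]

theorem powers_of_B_sub_A_general (g : ℕ) (hg : 2 ≤ g)
    (B A : Matrix (Fin g) (Fin g) ℝ)
    (hB : B = Matrix.of fun _ _ => (1 : ℝ))
    (σ : Equiv.Perm (Fin g)) (hA : A = σ.permMatrix ℝ)
    (hinv : A * A = 1)
    (θ : ℝ) (hθ : θ = 1 / ((g : ℝ) - 1)) :
    ∀ m : ℕ, 1 ≤ m →
      (Odd m → (B - A) ^ m = (((θ ^ m)⁻¹ + 1) / g) • B - A) ∧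
      (Even m → (B - A) ^ m = (((θ ^ m)⁻¹ - 1) / g) • B + 1) := by
  intro m _
  have hg0 : (g : ℝ) ≠ 0 := Nat.cast_ne_zero.mpr (by omega)
  have hBB : B * B = (g : ℝ) • B := by
    rw [hB, of_const_one_mul_self, Fintype.card_fin]
  have hAB : A * B = B := by rw [hA, hB, permMatrix_mul_of_const_one]
  have hBA : B * A = B := by rw [hA, hB, of_const_one_mul_permMatrix]
  have hpow := pow_sub_eq_smul_add_neg_pow hg0 hAB hBA hBB m
  rw [hθ, one_div, inv_pow, inv_inv]
  refine ⟨fun hm => ?_, fun hm => ?_⟩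
  · rw [hpow, hm.neg_one_pow, neg_pow_of_odd_of_mul_self_eq_one hinv hm, sub_neg_eq_add,
      ← sub_eq_add_neg]
  · rw [hpow, hm.neg_one_pow, neg_pow_of_even_of_mul_self_eq_one hinv hm]

/-- powers of B - A where B is the all-ones matrix and A an
involutive permutation matrix with zero diagonal. -/
theorem powers_of_B_sub_A (g : ℕ) (hg : 2 ≤ g)
    (B A : Matrix (Fin g) (Fin g) ℝ)
    (hB : B = Matrix.of fun _ _ => (1 : ℝ))
    (σ : Equiv.Perm (Fin g)) (hA : A = σ.permMatrix ℝ)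
    (hinv : A * A = 1) (hdiag : ∀ i, A i i = 0)
    (θ : ℝ) (hθ : θ = 1 / ((g : ℝ) - 1)) :
    ∀ m : ℕ, 1 ≤ m →
      (Odd m → (B - A) ^ m = (((θ ^ m)⁻¹ + 1) / g) • B - A) ∧
      (Even m → (B - A) ^ m = (((θ ^ m)⁻¹ - 1) / g) • B + 1) :=
  powers_of_B_sub_A_general g hg B A hB σ hA hinv θ hθ
end

section
/- Let g ≥ 3 and let P = (B−A)/(g−1) where B is the all-ones g×g matrix and A is an involutive permutation matrix with zero diagonal. Then every entry p_m(a,b) of the m-th power P^m satisfies |p_m(a,b) − 1/g| ≤ (1/(g−1))^m. -/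
open Matrix

/-!
Let `J` be the matrix with all entries `1/g`. Then `P = J + c • (A - J)` with `c = -1/(g-1)`.
Since `A` is doubly stochastic, `J` is idempotent and `J (A - J) = (A - J) J = 0`, so
`P ^ m = J + c ^ m • (A ^ m - J)` for `m ≥ 1`. The entries of the permutation matrix `A ^ m`
lie in `[0, 1]`, hence `|P ^ m a b - 1/g| ≤ |c| ^ m`.
-/

theorem add_pow_of_isIdempotentElem_of_mul_eq_zero {R : Type*} [Semiring R] {e x : R}
    (he : IsIdempotentElem e) (hex : e * x = 0) (hxe : x * e = 0) :
    ∀ {m : ℕ}, m ≠ 0 → (e + x) ^ m = e + x ^ m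
  | 1, _ => by rw [pow_one, pow_one]
  | m + 2, _ => by
    have hxme : x ^ (m + 1) * e = 0 := by rw [pow_succ, mul_assoc, hxe, mul_zero]
    rw [pow_succ, add_pow_of_isIdempotentElem_of_mul_eq_zero he hex hxe m.succ_ne_zero,
      add_mul, mul_add, mul_add, he.eq, hex, hxme, ← pow_succ, add_zero, zero_add]

section Uniform

variable (n : Type*) [Fintype n] [DecidableEq n]

noncomputable def uniformMatrix : Matrix n n ℝ := of fun _ _ => (Fintype.card n : ℝ)⁻¹

variable {n}

theorem mul_uniformMatrix_of_mem_doublyStochastic {M : Matrix n n ℝ}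
    (hM : M ∈ doublyStochastic ℝ n) : M * uniformMatrix n = uniformMatrix n := by
  ext i j
  simp [uniformMatrix, mul_apply, ← Finset.sum_mul, sum_row_of_mem_doublyStochastic hM]

theorem uniformMatrix_mul_of_mem_doublyStochastic {M : Matrix n n ℝ}
    (hM : M ∈ doublyStochastic ℝ n) : uniformMatrix n * M = uniformMatrix n := by
  ext i j
  simp [uniformMatrix, mul_apply, ← Finset.mul_sum, sum_col_of_mem_doublyStochastic hM]

theorem uniformMatrix_mem_doublyStochastic [Nonempty n] :
    uniformMatrix n ∈ doublyStochastic ℝ n := by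
  rw [mem_doublyStochastic_iff_sum]
  refine ⟨fun _ _ => inv_nonneg.mpr (Nat.cast_nonneg _), fun _ => ?_, fun _ => ?_⟩ <;>
    simp [uniformMatrix]

theorem isIdempotentElem_uniformMatrix [Nonempty n] : IsIdempotentElem (uniformMatrix n) :=
  mul_uniformMatrix_of_mem_doublyStochastic uniformMatrix_mem_doublyStochastic

theorem pow_uniformMatrix_add_smul_sub [Nonempty n] {M : Matrix n n ℝ}
    (hM : M ∈ doublyStochastic ℝ n) (c : ℝ) {m : ℕ} (hm : m ≠ 0) :
    (uniformMatrix n + c • (M - uniformMatrix n)) ^ m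
      = uniformMatrix n + c ^ m • (M ^ m - uniformMatrix n) := by
  have hJ := isIdempotentElem_uniformMatrix (n := n)
  have hJM : uniformMatrix n * (M - uniformMatrix n) = 0 := by
    rw [mul_sub, uniformMatrix_mul_of_mem_doublyStochastic hM, hJ.eq, sub_self]
  have hMJ : (M - uniformMatrix n) * uniformMatrix n = 0 := by
    rw [sub_mul, mul_uniformMatrix_of_mem_doublyStochastic hM, hJ.eq, sub_self]
  have hMpow : M ^ m = uniformMatrix n + (M - uniformMatrix n) ^ m := by
    simpa using add_pow_of_isIdempotentElem_of_mul_eq_zero hJ hJM hMJ hm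
  rw [add_pow_of_isIdempotentElem_of_mul_eq_zero hJ (by rw [mul_smul_comm, hJM, smul_zero])
    (by rw [smul_mul_assoc, hMJ, smul_zero]) hm, smul_pow, hMpow, add_sub_cancel_left]

theorem abs_sub_inv_card_le_one_of_mem_doublyStochastic {M : Matrix n n ℝ}
    (hM : M ∈ doublyStochastic ℝ n) (i j : n) : |M i j - (Fintype.card n : ℝ)⁻¹| ≤ 1 := by
  have hcard : (1 : ℝ) ≤ Fintype.card n := by exact_mod_cast Fintype.card_pos_iff.mpr ⟨i⟩
  have h0 : 0 ≤ (Fintype.card n : ℝ)⁻¹ := by positivity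
  have h1 : (Fintype.card n : ℝ)⁻¹ ≤ 1 := inv_le_one_of_one_le₀ hcard
  rw [abs_le]
  constructor <;> linarith [nonneg_of_mem_doublyStochastic hM (i := i) (j := j),
    le_one_of_mem_doublyStochastic hM (i := i) (j := j)]

end Uniform

theorem entries_of_P_pow_close_to_uniform_general (g : ℕ) (hg : 3 ≤ g)
    (B A P : Matrix (Fin g) (Fin g) ℝ)
    (hB : B = Matrix.of fun _ _ => (1 : ℝ))
    (σ : Equiv.Perm (Fin g)) (hA : A = σ.permMatrix ℝ)
    (hP : P = ((g : ℝ) - 1)⁻¹ • (B - A)) :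
    ∀ m : ℕ, ∀ a b : Fin g,
      |(P ^ m) a b - 1 / g| ≤ (1 / ((g : ℝ) - 1)) ^ m := by
  have hg1 : (1 : ℝ) < g := by exact_mod_cast (by omega : 1 < g)
  have : Nonempty (Fin g) := ⟨⟨0, by omega⟩⟩
  have hAds : A ∈ doublyStochastic ℝ (Fin g) := hA ▸ permMatrix_mem_doublyStochastic
  have hPJ : P = uniformMatrix (Fin g) + (-((g : ℝ) - 1)⁻¹) • (A - uniformMatrix (Fin g)) := by
    ext i j
    have : (g : ℝ) - 1 ≠ 0 := by linarith
    simp only [hP, hB, uniformMatrix, Matrix.add_apply, Matrix.smul_apply, Matrix.sub_apply,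
      Matrix.neg_apply, of_apply, smul_eq_mul, neg_smul, Fintype.card_fin]
    field_simp
    ring
  intro m a b
  rcases eq_or_ne m 0 with rfl | hm
  · simpa using abs_sub_inv_card_le_one_of_mem_doublyStochastic
      (one_mem (doublyStochastic ℝ (Fin g))) a b
  · have hAm := abs_sub_inv_card_le_one_of_mem_doublyStochastic (pow_mem hAds m) a b
    rw [Fintype.card_fin] at hAm
    rw [hPJ, pow_uniformMatrix_add_smul_sub hAds _ hm]
    simp only [Matrix.add_apply, Matrix.smul_apply, Matrix.sub_apply, uniformMatrix, of_apply,
      Fintype.card_fin, smul_eq_mul, one_div, add_sub_cancel_left]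
    rw [abs_mul, abs_pow, abs_neg, abs_inv, abs_of_pos (sub_pos.mpr hg1)]
    exact mul_le_of_le_one_right (by positivity) hAm

/-- entries of powers of the doubly stochastic matrix
P = (B - A)/(g-1) converge to 1/g at exponential rate 1/(g-1). -/
theorem entries_of_P_pow_close_to_uniform (g : ℕ) (hg : 3 ≤ g)
    (B A P : Matrix (Fin g) (Fin g) ℝ)
    (hB : B = Matrix.of fun _ _ => (1 : ℝ))
    (σ : Equiv.Perm (Fin g)) (hA : A = σ.permMatrix ℝ)
    (hinv : A * A = 1) (hdiag : ∀ i, A i i = 0)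
    (hP : P = ((g : ℝ) - 1)⁻¹ • (B - A)) :
    ∀ m : ℕ, ∀ a b : Fin g,
      |(P ^ m) a b - 1 / g| ≤ (1 / ((g : ℝ) - 1)) ^ m :=
  entries_of_P_pow_close_to_uniform_general g hg B A P hB σ hA hP
end

section
/- Let X be the stationary Markov chain on 𝒢 with transition probabilities p(a,b) = 1/(g−1)·1{b ≠ ā} and uniform initial distribution. If J, K ⊂ ℕ are finite sets with max(J) + m ≤ min(K) for some m ≥ 1, then the Radon–Nikodym derivative of the joint distribution ν_{J∪K} of (X_j)_{j∈J∪K} with respect to the product ν_J × ν_K satisfies 1 − gθ^m ≤ dν_{J∪K}/d(ν_J × ν_K) ≤ 1 + gθ^m on its support, where θ = 1/(g−1). -/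
/-!
A cylinder probability `ν {X_i = x_i, i ∈ S}` is `1/g` times a sum of path weights, which the
forward recursion `f_{n+1} = 1_{x_{n+1}} · (f_n P)` (the indicator only when `n + 1 ∈ S`)
computes. With `j = max J` and `k = min K`, the forward vector of `J` is concentrated on `x_j` at
time `j` and then evolves freely, and the one of `J ∪ K` is a multiple of the one of `K` from time
`k` on; this gives the exact Markov factorisation
`ν(J ∪ K) = ν(J) ν(K) · g P^{k-j}(x_j, x_k)`.
For the non-backtracking matrix, `P^{r+1}(a, b) - 1/g = -θ (P^r(a, bar b) - 1/g)`, so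
`|g P^r(a, b) - 1| ≤ g θ^r ≤ g θ^m`.
-/

open MeasureTheory Finset
open scoped ENNReal Classical

/-- Subadditivity bounds `μ (r ⁻¹' C)` and `μ (r ⁻¹' Cᶜ)` by the fibre sums over `C` and `Cᶜ`;
as these sums add up to `μ univ`, both bounds are equalities, whether or not the fibres are
measurable. -/
theorem MeasureTheory.measure_preimage_eq_sum_measure_preimage_singleton {α ι : Type*}
    [MeasurableSpace α] [Fintype ι]
    (μ : Measure α) [IsFiniteMeasure μ] (r : α → ι) (h : ∑ i, μ (r ⁻¹' {i}) = μ Set.univ)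
    (C : Finset ι) : μ (r ⁻¹' C) = ∑ i ∈ C, μ (r ⁻¹' {i}) := by
  have hfib : ∀ D : Finset ι, r ⁻¹' D = ⋃ i ∈ D, r ⁻¹' {i} := fun D => by ext; simp
  have hupper : ∀ D : Finset ι, μ (r ⁻¹' D) ≤ ∑ i ∈ D, μ (r ⁻¹' {i}) := fun D =>
    (hfib D).symm ▸ measure_biUnion_finset_le D _
  refine le_antisymm (hupper C) ?_
  have hfin : ∑ i ∈ Cᶜ, μ (r ⁻¹' {i}) ≠ ∞ :=
    ne_top_of_le_ne_top (measure_ne_top μ Set.univ)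
      (h ▸ sum_le_sum_of_subset (subset_univ _))
  refine (ENNReal.add_le_add_iff_right hfin).1 ?_
  calc ∑ i ∈ C, μ (r ⁻¹' {i}) + ∑ i ∈ Cᶜ, μ (r ⁻¹' {i}) = μ Set.univ := by
        rw [sum_add_sum_compl, h]
    _ ≤ μ (r ⁻¹' C) + μ (r ⁻¹' ↑Cᶜ) := by
        refine (measure_mono fun y _ => ?_).trans (measure_union_le _ _)
        simp
    _ ≤ μ (r ⁻¹' C) + ∑ i ∈ Cᶜ, μ (r ⁻¹' {i}) := by gcongr; exact hupper _

theorem Fin.sum_univ_fun_eq_sum_snoc {α M : Type*} [Fintype α] [AddCommMonoid M] {n : ℕ}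
    (f : (Fin (n + 1) → α) → M) : ∑ v, f v = ∑ b, ∑ u : Fin n → α, f (Fin.snoc u b) := by
  rw [← (Fin.snocEquiv fun _ => α).sum_comp, Fintype.sum_prod_type]
  rfl

namespace Matrix

variable {G : Type*}

noncomputable def pathWeight (P : Matrix G G ℝ) {n : ℕ} (v : Fin (n + 1) → G) : ℝ :=
  ∏ i : Fin n, P (v i.castSucc) (v i.succ)

theorem pathWeight_snoc (P : Matrix G G ℝ) {n : ℕ} (u : Fin (n + 1) → G) (b : G) :
    pathWeight P (Fin.snoc u b : Fin (n + 2) → G) = pathWeight P u * P (u (Fin.last n)) b := by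
  simp [pathWeight, Fin.prod_univ_castSucc, Fin.succ_castSucc, -Fin.castSucc_succ]

variable [Fintype G]

/-- `forwardVec P S x n b` is the total `P`-weight of the paths `v₀ … vₙ` with `vₙ = b` that
agree with `x` on `S`. -/
noncomputable def forwardVec (P : Matrix G G ℝ) (S : Finset ℕ) (x : ℕ → G) : ℕ → G → ℝ
  | 0 => fun b => if 0 ∈ S → b = x 0 then 1 else 0
  | n + 1 => fun b => if n + 1 ∈ S → b = x (n + 1) then (forwardVec P S x n ᵥ* P) b else 0

variable {P : Matrix G G ℝ} {S S' : Finset ℕ} {x : ℕ → G}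

theorem forwardVec_congr {n : ℕ} (h : ∀ i ≤ n, i ∈ S ↔ i ∈ S') :
    forwardVec P S x n = forwardVec P S' x n := by
  induction n with
  | zero => ext b; simp [forwardVec, h 0 le_rfl]
  | succ n ih =>
    ext b
    simp only [forwardVec, h (n + 1) le_rfl, ih fun i hi => h i (by omega)]

theorem forwardVec_succ_of_notMem {n : ℕ} (hn : n + 1 ∉ S) :
    forwardVec P S x (n + 1) = forwardVec P S x n ᵥ* P := by
  ext b; simp [forwardVec, hn]

theorem forwardVec_add_of_le {t : ℕ} (hS : ∀ i ∈ S, i ≤ t) (s : ℕ) :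
    forwardVec P S x (t + s) = forwardVec P S x t ᵥ* P ^ s := by
  induction s with
  | zero => simp
  | succ s ih =>
    rw [← add_assoc, forwardVec_succ_of_notMem fun h => by have := hS _ h; omega, ih,
      vecMul_vecMul, pow_succ]

theorem forwardVec_insert_self (S : Finset ℕ) (t : ℕ) :
    forwardVec P (insert t S) x t = Pi.single (x t) (forwardVec P S x t (x t)) := by
  ext b
  cases t with
  | zero => by_cases hb : b = x 0 <;> simp [forwardVec, hb]
  | succ n =>
    have hprefix : forwardVec P (insert (n + 1) S) x n = forwardVec P S x n :=
      forwardVec_congr fun i hi => by simp; omega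
    by_cases hb : b = x (n + 1) <;> simp [forwardVec, hb, hprefix]

theorem forwardVec_of_mem {t : ℕ} (ht : t ∈ S) :
    forwardVec P S x t = Pi.single (x t) (forwardVec P S x t (x t)) := by
  conv_lhs => rw [← insert_eq_of_mem ht]
  exact forwardVec_insert_self S t

theorem forwardVec_empty (hP : P ∈ doublyStochastic ℝ G) (n : ℕ) :
    forwardVec P ∅ x n = 1 := by
  have h0 : forwardVec P ∅ x 0 = 1 := by ext; simp [forwardVec]
  rw [← zero_add n, forwardVec_add_of_le (by simp) n, h0,
    one_vecMul_of_mem_doublyStochastic (pow_mem hP n)]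

theorem forwardVec_eq_smul_of_agree {t : ℕ} {c : ℝ} (hS : ∀ i, t < i → (i ∈ S ↔ i ∈ S'))
    (ht : forwardVec P S x t = c • forwardVec P S' x t) :
    ∀ n, t ≤ n → forwardVec P S x n = c • forwardVec P S' x n := by
  intro n hn
  induction n, hn using Nat.le_induction with
  | base => exact ht
  | succ n hn ih =>
    ext b
    simp only [forwardVec, hS (n + 1) (by omega), ih, smul_vecMul, Pi.smul_apply]
    split_ifs <;> simp

theorem forwardVec_add_of_mem {t : ℕ} (hS : ∀ i ∈ S, i ≤ t) (ht : t ∈ S) (s : ℕ) :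
    forwardVec P S x (t + s) = forwardVec P S x t (x t) • (P ^ s) (x t) := by
  rw [forwardVec_add_of_le hS, forwardVec_of_mem ht, single_vecMul, Pi.single_eq_same]
  rfl

theorem sum_forwardVec_of_le (hP : P ∈ doublyStochastic ℝ G) {t n : ℕ} (hS : ∀ i ∈ S, i ≤ t)
    (ht : t ∈ S) (htn : t ≤ n) : ∑ b, forwardVec P S x n b = forwardVec P S x t (x t) := by
  rw [← Nat.add_sub_cancel' htn, forwardVec_add_of_mem hS ht]
  simp [← mul_sum, sum_row_of_mem_doublyStochastic (pow_mem hP _)]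

theorem forwardVec_union_eq_smul (hP : P ∈ doublyStochastic ℝ G) {J K : Finset ℕ} {j k n : ℕ}
    (hJ : ∀ i ∈ J, i ≤ j) (hj : j ∈ J) (hK : ∀ i ∈ K, k ≤ i) (hk : k ∈ K) (hjk : j ≤ k)
    (hkn : k ≤ n) :
    forwardVec P (J ∪ K) x n =
      (forwardVec P J x j (x j) * (P ^ (k - j)) (x j) (x k)) • forwardVec P K x n := by
  have hK_at : forwardVec P K x k = Pi.single (x k) 1 := by
    rw [forwardVec_congr (S' := insert k ∅), forwardVec_insert_self, forwardVec_empty hP]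
    · rfl
    intro i hi
    simp only [mem_insert, notMem_empty, or_false]
    exact ⟨fun h => le_antisymm hi (hK i h), fun h => h ▸ hk⟩
  have hJK_at : forwardVec P (J ∪ K) x k =
      (forwardVec P J x j (x j) * (P ^ (k - j)) (x j) (x k)) • forwardVec P K x k := by
    rw [forwardVec_congr (S' := insert k J), forwardVec_insert_self, hK_at,
      ← Nat.add_sub_cancel' hjk, forwardVec_add_of_mem hJ hj, Nat.add_sub_cancel' hjk]
    · ext b; by_cases hb : b = x k <;> simp [hb]
    intro i hi
    simp only [mem_union, mem_insert]
    constructor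
    · rintro (h | h)
      · exact Or.inr h
      · exact Or.inl (le_antisymm hi (hK i h))
    · rintro (rfl | h)
      · exact Or.inr hk
      · exact Or.inl h
  refine forwardVec_eq_smul_of_agree (fun i hi => ?_) hJK_at n hkn
  simpa using fun h => by have := hJ i h; omega

theorem sum_pathWeight_mul_eq_sum_forwardVec_mul (S : Finset ℕ) (x : ℕ → G) (n : ℕ) (φ : G → ℝ) :
    ∑ v : Fin (n + 1) → G,
      (if ∀ i : Fin (n + 1), (i : ℕ) ∈ S → v i = x i then pathWeight P v * φ (v (Fin.last n))
        else 0) = ∑ b, forwardVec P S x n b * φ b := by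
  induction n generalizing φ with
  | zero =>
    rw [← (Equiv.funUnique (Fin 1) G).symm.sum_comp]
    refine sum_congr rfl fun b _ => ?_
    simp [pathWeight, forwardVec]
  | succ n ih =>
    set ψ : G → ℝ := fun a => ∑ b, if n + 1 ∈ S → b = x (n + 1) then P a b * φ b else 0
    have hstep : ∀ u : Fin (n + 1) → G, (∑ b,
        if ∀ i : Fin (n + 2), (i : ℕ) ∈ S → (Fin.snoc u b : Fin (n + 2) → G) i = x i then
          pathWeight P (Fin.snoc u b : Fin (n + 2) → G) * φ b else 0) =
        if ∀ i : Fin (n + 1), (i : ℕ) ∈ S → u i = x i then pathWeight P u * ψ (u (Fin.last n))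
        else 0 := by
      intro u
      simp only [Fin.forall_fin_succ', Fin.snoc_castSucc, Fin.val_castSucc, Fin.snoc_last,
        Fin.val_last, pathWeight_snoc, ite_and]
      split_ifs <;> simp [ψ, mul_sum, mul_assoc]
    rw [Fin.sum_univ_fun_eq_sum_snoc, sum_comm]
    simp only [Fin.snoc_last]
    rw [sum_congr rfl fun u _ => hstep u, ih ψ]
    simp only [ψ, mul_sum, forwardVec]
    rw [sum_comm]
    refine sum_congr rfl fun b _ => ?_
    split_ifs <;> simp [vecMul, dotProduct, sum_mul, mul_assoc]

noncomputable def nonBacktracking (bar : G → G) : Matrix G G ℝ :=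
  of fun a b => if b = bar a then 0 else 1 / ((Fintype.card G : ℝ) - 1)

section NonBacktracking

variable {bar : G → G}

theorem nonBacktracking_apply (a b : G) :
    nonBacktracking bar a b =
      1 / ((Fintype.card G : ℝ) - 1) * (1 - if b = bar a then 1 else 0) := by
  simp only [nonBacktracking, of_apply]; split_ifs <;> simp

theorem nonBacktracking_apply_eq_of_involutive (hbar : Function.Involutive bar) (a b : G) :
    nonBacktracking bar a b =
      1 / ((Fintype.card G : ℝ) - 1) * (1 - if a = bar b then 1 else 0) := by
  rw [nonBacktracking_apply, eq_comm (a := b), hbar.eq_iff]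

theorem nonBacktracking_mem_doublyStochastic (hbar : Function.Involutive bar)
    (hG : 1 < Fintype.card G) : nonBacktracking bar ∈ doublyStochastic ℝ G := by
  have hg : (1 : ℝ) < Fintype.card G := by exact_mod_cast hG
  have hsum : ∀ a : G,
      ∑ b : G, 1 / ((Fintype.card G : ℝ) - 1) * (1 - if b = a then 1 else 0) = 1 := by
    intro a
    rw [← mul_sum, sum_sub_distrib, sum_ite_eq']
    simp [sub_ne_zero.2 hg.ne']
  refine mem_doublyStochastic_iff_sum.2 ⟨fun a b => ?_, fun a => ?_, fun b => ?_⟩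
  · rw [nonBacktracking_apply]
    split_ifs <;> simp; linarith
  · simpa only [nonBacktracking_apply] using hsum (bar a)
  · simpa only [nonBacktracking_apply_eq_of_involutive hbar] using hsum (bar b)

theorem nonBacktracking_pow_succ_apply (hbar : Function.Involutive bar)
    (hG : 1 < Fintype.card G) (r : ℕ) (a b : G) :
    (nonBacktracking bar ^ (r + 1)) a b =
      1 / ((Fintype.card G : ℝ) - 1) * (1 - (nonBacktracking bar ^ r) a (bar b)) := by
  have hrow := sum_row_of_mem_doublyStochastic
    (pow_mem (nonBacktracking_mem_doublyStochastic hbar hG) r) a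
  simp only [pow_succ, mul_apply, nonBacktracking_apply_eq_of_involutive hbar, mul_sub, mul_one,
    mul_ite, mul_zero, sum_sub_distrib, sum_ite_eq', mem_univ, if_true]
  rw [← sum_mul, hrow]
  ring

theorem abs_nonBacktracking_pow_apply_sub_le (hbar : Function.Involutive bar)
    (hG : 1 < Fintype.card G) (r : ℕ) (a b : G) :
    |(nonBacktracking bar ^ r) a b - 1 / Fintype.card G| ≤
      (1 / ((Fintype.card G : ℝ) - 1)) ^ r := by
  have hg : (1 : ℝ) < Fintype.card G := by exact_mod_cast hG
  have hinv_card : 1 / (Fintype.card G : ℝ) ≤ 1 := by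
    rw [div_le_one (by linarith)]; exact hg.le
  induction r generalizing b with
  | zero =>
    have h01 : (0 : ℝ) ≤ (1 : Matrix G G ℝ) a b ∧ (1 : Matrix G G ℝ) a b ≤ 1 := by
      rw [one_apply]; split_ifs <;> norm_num
    rw [pow_zero, pow_zero, abs_sub_le_iff]
    constructor <;> linarith [h01.1, h01.2, one_div_pos.2 (zero_lt_one.trans hg)]
  | succ r ih =>
    have hstep : (nonBacktracking bar ^ (r + 1)) a b - 1 / Fintype.card G =
        -(1 / ((Fintype.card G : ℝ) - 1)) *
          ((nonBacktracking bar ^ r) a (bar b) - 1 / Fintype.card G) := by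
      rw [nonBacktracking_pow_succ_apply hbar hG]
      have hg0 : (Fintype.card G : ℝ) ≠ 0 := by positivity
      have hg1 : (Fintype.card G : ℝ) - 1 ≠ 0 := sub_ne_zero.2 hg.ne'
      field_simp
      ring
    rw [hstep, abs_mul, abs_neg, abs_of_pos (one_div_pos.2 (sub_pos.2 hg)), pow_succ, mul_comm]
    exact mul_le_mul_of_nonneg_right (ih _) (one_div_pos.2 (sub_pos.2 hg)).le

theorem abs_card_mul_nonBacktracking_pow_apply_sub_one_le (hbar : Function.Involutive bar)
    (hG : 1 < Fintype.card G) {m r : ℕ} (hmr : m ≤ r) (a b : G) :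
    |Fintype.card G * (nonBacktracking bar ^ r) a b - 1| ≤
      Fintype.card G * (1 / ((Fintype.card G : ℝ) - 1)) ^ m := by
  have hg : (2 : ℝ) ≤ Fintype.card G := by exact_mod_cast hG
  have hθ : 1 / ((Fintype.card G : ℝ) - 1) ≤ 1 := by rw [div_le_one (by linarith)]; linarith
  calc |Fintype.card G * (nonBacktracking bar ^ r) a b - 1|
      = Fintype.card G * |(nonBacktracking bar ^ r) a b - 1 / Fintype.card G| := by
        rw [← abs_of_pos (by linarith : (0 : ℝ) < Fintype.card G), ← abs_mul, mul_sub,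
          abs_of_pos (by linarith : (0 : ℝ) < Fintype.card G), mul_one_div_cancel (by linarith)]
    _ ≤ Fintype.card G * (1 / ((Fintype.card G : ℝ) - 1)) ^ r := by
        gcongr; exact abs_nonBacktracking_pow_apply_sub_le hbar hG r a b
    _ ≤ Fintype.card G * (1 / ((Fintype.card G : ℝ) - 1)) ^ m := by
        exact mul_le_mul_of_nonneg_left
          (pow_le_pow_of_le_one (one_div_nonneg.2 (by linarith)) hθ hmr) (by linarith)

end NonBacktracking

end Matrix

section CylinderMeasure

open Matrix

variable {G : Type*} [Fintype G] [MeasurableSpace G]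

def IsUniformMarkovLaw (P : Matrix G G ℝ) (ν : Measure (ℕ → G)) : Prop :=
  ∀ n : ℕ, 1 ≤ n → ∀ y : ℕ → G, ν {z : ℕ → G | ∀ i < n, z i = y i} =
    ENNReal.ofReal ((1 / (Fintype.card G : ℝ)) * ∏ i ∈ range (n - 1), P (y i) (y (i + 1)))

variable {P : Matrix G G ℝ} {ν : Measure (ℕ → G)}

theorem measure_preimage_restrict_singleton (hν : IsUniformMarkovLaw P ν) {n : ℕ}
    (v : Fin (n + 1) → G) :
    ν ((fun (y : ℕ → G) (i : Fin (n + 1)) => y i) ⁻¹' {v}) =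
      ENNReal.ofReal (pathWeight P v / Fintype.card G) := by
  set y₀ : ℕ → G := Function.extend (fun i : Fin (n + 1) => (i : ℕ)) v fun _ => v 0
  have hy₀ : ∀ i : Fin (n + 1), y₀ i = v i := Fin.val_injective.extend_apply v _
  have hpre : (fun (y : ℕ → G) (i : Fin (n + 1)) => y i) ⁻¹' {v} =
      {y | ∀ i < n + 1, y i = y₀ i} := by
    ext y; simp [funext_iff, Fin.forall_iff, ← hy₀]
  rw [hpre, hν (n + 1) (by omega) y₀, Nat.add_sub_cancel, ← Fin.prod_univ_eq_prod_range]
  simp [pathWeight, ← hy₀, div_eq_inv_mul]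

variable [IsProbabilityMeasure ν]

theorem toReal_measure_cylinder_eq_sum_forwardVec (hP : P ∈ doublyStochastic ℝ G)
    (hν : IsUniformMarkovLaw P ν)
    (S : Finset ℕ) (x : ℕ → G) {n : ℕ} (hS : ∀ i ∈ S, i ≤ n) :
    (ν {y : ℕ → G | ∀ i ∈ S, y i = x i}).toReal =
      (∑ b, forwardVec P S x n b) / Fintype.card G := by
  set r : (ℕ → G) → Fin (n + 1) → G := fun y i => y i
  have hweight_nonneg : ∀ v : Fin (n + 1) → G, 0 ≤ pathWeight P v / Fintype.card G := fun v =>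
    div_nonneg (prod_nonneg fun i _ => nonneg_of_mem_doublyStochastic hP) (Nat.cast_nonneg _)
  have hfibre := measure_preimage_restrict_singleton hν (n := n)
  have hpaths : ∀ T : Finset ℕ, ∑ v : Fin (n + 1) → G,
      (if ∀ i : Fin (n + 1), (i : ℕ) ∈ T → v i = x i then pathWeight P v else 0) =
      ∑ b, forwardVec P T x n b := fun T => by
    simpa using sum_pathWeight_mul_eq_sum_forwardVec_mul T x n fun _ => 1
  have htotal : ∑ v, ν (r ⁻¹' {v}) = ν Set.univ := by
    have : Nonempty G := (nonempty_of_isProbabilityMeasure ν).map (· 0)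
    have hsum : ∑ v : Fin (n + 1) → G, pathWeight P v = Fintype.card G := by
      simpa [forwardVec_empty hP] using hpaths ∅
    rw [measure_univ, sum_congr rfl fun v _ => hfibre v,
      ← ENNReal.ofReal_sum_of_nonneg fun v _ => hweight_nonneg v, ← sum_div, hsum,
      div_self (Nat.cast_ne_zero.2 Fintype.card_ne_zero), ENNReal.ofReal_one]
  have hcyl_S : {y : ℕ → G | ∀ i ∈ S, y i = x i} =
      r ⁻¹' (univ.filter fun v : Fin (n + 1) → G =>
        ∀ i : Fin (n + 1), (i : ℕ) ∈ S → v i = x i) := by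
    ext y
    simp only [coe_filter, mem_univ, true_and, Set.mem_preimage, r]
    exact ⟨fun h i hi => h i hi, fun h i hi => h ⟨i, Nat.lt_succ_of_le (hS i hi)⟩ hi⟩
  rw [hcyl_S, measure_preimage_eq_sum_measure_preimage_singleton ν r htotal,
    sum_congr rfl fun v _ => hfibre v,
    ← ENNReal.ofReal_sum_of_nonneg fun v _ => hweight_nonneg v,
    ENNReal.toReal_ofReal (sum_nonneg fun v _ => hweight_nonneg v), ← sum_div, sum_filter,
    hpaths]

theorem toReal_measure_cylinder_union (hP : P ∈ doublyStochastic ℝ G)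
    (hν : IsUniformMarkovLaw P ν) (J K : Finset ℕ) (hJ : J.Nonempty) (hK : K.Nonempty)
    (hsep : J.max' hJ ≤ K.min' hK) (x : ℕ → G) :
    (ν {y : ℕ → G | ∀ i ∈ J ∪ K, y i = x i}).toReal =
      (ν {y : ℕ → G | ∀ i ∈ J, y i = x i}).toReal * (ν {y : ℕ → G | ∀ i ∈ K, y i = x i}).toReal *
        (Fintype.card G * (P ^ (K.min' hK - J.max' hJ)) (x (J.max' hJ)) (x (K.min' hK))) := by
  set M := K.max' hK
  have hKM : ∀ i ∈ K, i ≤ M := K.le_max'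
  have hkM : K.min' hK ≤ M := hKM _ (K.min'_mem hK)
  have hJM : ∀ i ∈ J, i ≤ M := fun i hi => (J.le_max' i hi).trans (hsep.trans hkM)
  have hJKM : ∀ i ∈ J ∪ K, i ≤ M := by simpa [or_imp, forall_and] using ⟨hJM, hKM⟩
  have : Nonempty G := ⟨x 0⟩
  rw [toReal_measure_cylinder_eq_sum_forwardVec hP hν _ x hJKM,
    toReal_measure_cylinder_eq_sum_forwardVec hP hν _ x hJM,
    toReal_measure_cylinder_eq_sum_forwardVec hP hν _ x hKM,
    sum_forwardVec_of_le hP J.le_max' (J.max'_mem hJ) (hsep.trans hkM),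
    forwardVec_union_eq_smul hP J.le_max' (J.max'_mem hJ) K.min'_le (K.min'_mem hK) hsep hkM]
  simp only [Pi.smul_apply, smul_eq_mul, ← mul_sum]
  field_simp

end CylinderMeasure

theorem markov_chain_exponential_separation_general (G : Type) [Fintype G] [MeasurableSpace G]
    (g : ℕ) (hg : 3 ≤ g) (hcard : Fintype.card G = g)
    (bar : G → G) (hinv : ∀ x, bar (bar x) = x)
    (p : G → G → ℝ)
    (hp : ∀ a b, p a b = if b = bar a then 0 else 1 / ((g : ℝ) - 1))
    (θ : ℝ) (hθ : θ = 1 / ((g : ℝ) - 1))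
    (ν : Measure (ℕ → G)) [IsProbabilityMeasure ν]
    (hcyl : ∀ n : ℕ, 1 ≤ n → ∀ x : ℕ → G,
      ν {y : ℕ → G | ∀ i < n, y i = x i} =
        ENNReal.ofReal ((1 / (g : ℝ)) * ∏ i ∈ range (n - 1), p (x i) (x (i + 1))))
    (J K : Finset ℕ) (hJ : J.Nonempty) (hK : K.Nonempty)
    (m : ℕ) (hsep : J.max' hJ + m ≤ K.min' hK)
    (x : ℕ → G) :
    (1 - (g : ℝ) * θ ^ m) *
        ((ν {y : ℕ → G | ∀ i ∈ J, y i = x i}).toReal *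
          (ν {y : ℕ → G | ∀ i ∈ K, y i = x i}).toReal)
      ≤ (ν {y : ℕ → G | ∀ i ∈ J ∪ K, y i = x i}).toReal ∧
    (ν {y : ℕ → G | ∀ i ∈ J ∪ K, y i = x i}).toReal
      ≤ (1 + (g : ℝ) * θ ^ m) *
        ((ν {y : ℕ → G | ∀ i ∈ J, y i = x i}).toReal *
          (ν {y : ℕ → G | ∀ i ∈ K, y i = x i}).toReal) := by
  subst hcard hθ
  have hG : 1 < Fintype.card G := by omega
  have hP : Matrix.of p = Matrix.nonBacktracking bar := by
    ext a b; simp [Matrix.nonBacktracking, hp]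
  have hds : Matrix.of p ∈ doublyStochastic ℝ G := by
    rw [hP]; exact Matrix.nonBacktracking_mem_doublyStochastic hinv hG
  have hfactor := toReal_measure_cylinder_union hds hcyl J K hJ hK (by omega) x
  have hdensity := abs_le.1 <| Matrix.abs_card_mul_nonBacktracking_pow_apply_sub_one_le hinv hG
    (by omega : m ≤ K.min' hK - J.max' hJ) (x (J.max' hJ)) (x (K.min' hK))
  rw [hfactor, hP]
  have hprod : 0 ≤ (ν {y : ℕ → G | ∀ i ∈ J, y i = x i}).toReal *
      (ν {y : ℕ → G | ∀ i ∈ K, y i = x i}).toReal := by positivity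
  constructor <;> nlinarith

/-- exponential mixing of the Markov chain of random strings.
If `J`, `K` are finite index sets with `max J + m ≤ min K`, then the density of
the joint law of `(X_j)_{j ∈ J ∪ K}` with respect to the product of the laws of
`(X_j)_{j ∈ J}` and `(X_j)_{j ∈ K}` lies between `1 - gθ^m` and `1 + gθ^m`,
stated here as bounds on cylinder probabilities. -/
theorem markov_chain_exponential_separation (G : Type) [Fintype G] [MeasurableSpace G]
    (g : ℕ) (hg : 3 ≤ g) (hcard : Fintype.card G = g)
    (bar : G → G) (hinv : ∀ x, bar (bar x) = x) (hnf : ∀ x, bar x ≠ x)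
    (p : G → G → ℝ)
    (hp : ∀ a b, p a b = if b = bar a then 0 else 1 / ((g : ℝ) - 1))
    (θ : ℝ) (hθ : θ = 1 / ((g : ℝ) - 1))
    (ν : Measure (ℕ → G)) [IsProbabilityMeasure ν]
    (hcyl : ∀ n : ℕ, 1 ≤ n → ∀ x : ℕ → G,
      ν {y : ℕ → G | ∀ i < n, y i = x i} =
        ENNReal.ofReal ((1 / (g : ℝ)) * ∏ i ∈ range (n - 1), p (x i) (x (i + 1))))
    (J K : Finset ℕ) (hJ : J.Nonempty) (hK : K.Nonempty)
    (m : ℕ) (hm : 1 ≤ m) (hsep : J.max' hJ + m ≤ K.min' hK)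
    (x : ℕ → G)
    (hsupp : ν {y : ℕ → G | ∀ i ∈ J, y i = x i} ≠ 0 ∧
             ν {y : ℕ → G | ∀ i ∈ K, y i = x i} ≠ 0) :
    (1 - (g : ℝ) * θ ^ m) *
        ((ν {y : ℕ → G | ∀ i ∈ J, y i = x i}).toReal *
          (ν {y : ℕ → G | ∀ i ∈ K, y i = x i}).toReal)
      ≤ (ν {y : ℕ → G | ∀ i ∈ J ∪ K, y i = x i}).toReal ∧
    (ν {y : ℕ → G | ∀ i ∈ J ∪ K, y i = x i}).toReal
      ≤ (1 + (g : ℝ) * θ ^ m) *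
        ((ν {y : ℕ → G | ∀ i ∈ J, y i = x i}).toReal *
          (ν {y : ℕ → G | ∀ i ∈ K, y i = x i}).toReal) :=
  markov_chain_exponential_separation_general G g hg hcard bar hinv p hp θ hθ ν hcyl J K hJ hK m
    hsep x
end

section
/- Let J_i, J_k, J_m be independent random variables each uniform on {0,…,g−2}, with i, k, m distinct indices, and t(a,b) = a(g−2−b)+b(g−2−a). Then Cov(t(J_i,J_k), t(J_i,J_m)) = 0, i.e., E[t(J_i,J_k)·t(J_i,J_m)] = (g−2)⁴/4 = E[t(J_i,J_k)]·E[t(J_i,J_m)]. -/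
open Finset

/-!
Write `c = g - 2`, so that `J` ranges over `range (c + 1)` with mean `c / 2`. Since
`t a b = c² / 2 + (c - 2a)(b - c / 2)`, averaging over `b` kills the second term: the conditional
mean of `t(J_i, J_k)` given `J_i` is the constant `c² / 2`. Given `J_i`, the factors `t(J_i, J_k)`
and `t(J_i, J_m)` are independent, so the mean of the product is `(c² / 2)²`, which is also the
product of the means.
-/

section RowSums

variable {ι κ R : Type*} [Semiring R] {s : Finset ι} {u : Finset κ} {f : ι → κ → R} {r : R}

lemma sum_sum_eq_card_mul_of_forall_sum_eq (h : ∀ i ∈ s, ∑ k ∈ u, f i k = r) :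
    ∑ i ∈ s, ∑ k ∈ u, f i k = #s * r := by
  rw [sum_congr rfl h, sum_const, nsmul_eq_mul]

lemma sum_sum_sum_mul_eq_card_mul_sq_of_forall_sum_eq (h : ∀ i ∈ s, ∑ k ∈ u, f i k = r) :
    ∑ i ∈ s, ∑ k ∈ u, ∑ m ∈ u, f i k * f i m = #s * r ^ 2 := by
  refine sum_sum_eq_card_mul_of_forall_sum_eq fun i hi => ?_
  rw [← sum_mul_sum, h i hi, sq]

end RowSums

section CenteredSums

lemma sum_range_cast_mul_two {R : Type*} [CommRing R] (n : ℕ) :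
    ∑ b ∈ range n, (b : R) * 2 = n * (n - 1) := by
  induction n with
  | zero => simp
  | succ n ih => rw [sum_range_succ, ih]; push_cast; ring

variable {K : Type*} [Field K] [CharZero K]

lemma sum_range_sub_mean (n : ℕ) : ∑ b ∈ range n, ((b : K) - ((n : K) - 1) / 2) = 0 := by
  have h := sum_range_cast_mul_two (R := K) n
  rw [← sum_mul] at h
  rw [sum_sub_distrib, sum_const, card_range, nsmul_eq_mul]
  linear_combination h / 2

lemma sum_range_mul_sub_add_mul_sub (n : ℕ) (a : K) :
    ∑ b ∈ range n, (a * ((n : K) - 1 - b) + b * ((n : K) - 1 - a)) = n * ((n : K) - 1) ^ 2 / 2 := by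
  have hcentered : ∀ b : K, a * ((n : K) - 1 - b) + b * ((n : K) - 1 - a) =
      ((n : K) - 1) ^ 2 / 2 + ((n : K) - 1 - 2 * a) * (b - ((n : K) - 1) / 2) :=
    fun b => by ring
  rw [sum_congr rfl fun (b : ℕ) _ => hcentered b, sum_add_distrib, ← mul_sum, sum_range_sub_mean,
    sum_const, card_range, nsmul_eq_mul]
  ring

end CenteredSums

/-- with `t(a,b) = a(g-2-b) + b(g-2-a)` and `J_i, J_k, J_m`
independent uniform on `{0,…,g-2}`, `t(J_i,J_k)` and `t(J_i,J_m)` are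
uncorrelated: `E[t(J_i,J_k)·t(J_i,J_m)] = (g-2)⁴/4 = E[t(J_i,J_k)]·E[t(J_i,J_m)]`. -/
theorem t_kernel_uncorrelated_shared_index (g : ℕ) (hg : 3 ≤ g)
    (t : ℝ → ℝ → ℝ)
    (ht : ∀ a b : ℝ, t a b = a * ((g : ℝ) - 2 - b) + b * ((g : ℝ) - 2 - a)) :
    (∑ i ∈ range (g - 1), ∑ k ∈ range (g - 1), ∑ m ∈ range (g - 1),
        t (i : ℝ) (k : ℝ) * t (i : ℝ) (m : ℝ)) / ((g : ℝ) - 1) ^ 3 =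
      ((g : ℝ) - 2) ^ 4 / 4 ∧
    ((g : ℝ) - 2) ^ 4 / 4 =
      ((∑ i ∈ range (g - 1), ∑ k ∈ range (g - 1), t (i : ℝ) (k : ℝ)) /
          ((g : ℝ) - 1) ^ 2) *
        ((∑ i ∈ range (g - 1), ∑ m ∈ range (g - 1), t (i : ℝ) (m : ℝ)) /
          ((g : ℝ) - 1) ^ 2) := by
  have hn : ((g - 1 : ℕ) : ℝ) = (g : ℝ) - 1 := by push_cast [Nat.cast_sub (by omega : 1 ≤ g)]; rfl
  have hn_ne : (g : ℝ) - 1 ≠ 0 := by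
    have : (3 : ℝ) ≤ g := by exact_mod_cast hg
    linarith
  have hrow : ∀ i ∈ range (g - 1), ∑ k ∈ range (g - 1), t (i : ℝ) (k : ℝ) =
      ((g : ℝ) - 1) * ((g : ℝ) - 2) ^ 2 / 2 := fun i _ => by
    have h := sum_range_mul_sub_add_mul_sub (K := ℝ) (g - 1) i
    simp only [hn, show (g : ℝ) - 1 - 1 = (g : ℝ) - 2 by ring] at h
    simpa only [ht] using h
  rw [sum_sum_sum_mul_eq_card_mul_sq_of_forall_sum_eq hrow,
    sum_sum_eq_card_mul_of_forall_sum_eq hrow, card_range, hn]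
  constructor <;> field_simp <;> ring
end

section
/- Let J_i, J_k be independent uniform on {0,…,g−2} with i ≠ k, and t(a,b)=a(g−2−b)+b(g−2−a). Then E[t(J_i,J_i)·t(J_i,J_k)] = (g−2)³(g−3)/6 = E[t(J_i,J_i)]·E[t(J_i,J_k)]; that is, t(J_i,J_i) and t(J_i,J_k) are uncorrelated. -/
/-!
Write `m = g - 2`, so that `J` ranges over `{0, …, m}` and `t a b = m (a + b) - 2 a b`.
Reflecting the second argument gives `t a b + t a (m - b) = m²`, so every row sum
`∑ₖ t a k` equals `(m + 1) m² / 2` regardless of `a`: the conditional mean of `t(J_i, J_k)`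
given `J_i` is the constant `m² / 2`, which is exactly uncorrelatedness.
The common value then only needs `∑ᵢ i (m - i) = (m + 1) m (m - 1) / 6`.
-/

open Finset

theorem Finset.sum_range_add_sum_range_of_add_reflect {M : Type*} [AddCommMonoid M]
    (f : ℕ → M) (n : ℕ) (c : M) (h : ∀ k < n, f k + f (n - 1 - k) = c) :
    ∑ k ∈ range n, f k + ∑ k ∈ range n, f k = n • c := by
  calc ∑ k ∈ range n, f k + ∑ k ∈ range n, f k
      = ∑ k ∈ range n, f k + ∑ k ∈ range n, f (n - 1 - k) := by rw [sum_range_reflect]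
    _ = ∑ _k ∈ range n, c := by
        rw [← sum_add_distrib]
        exact sum_congr rfl fun k hk => h k (mem_range.mp hk)
    _ = n • c := by rw [sum_const, card_range]

theorem sum_range_mul_sub (c : ℝ) (n : ℕ) :
    ∑ i ∈ range n, (i : ℝ) * (c - i) =
      c * n * (n - 1) / 2 - n * (n - 1) * (2 * n - 1) / 6 := by
  induction n with
  | zero => simp
  | succ n ih =>
    rw [sum_range_succ, ih]
    push_cast
    ring

theorem sum_range_kernel_row (m : ℕ) (a : ℝ) :
    ∑ k ∈ range (m + 1), (a * ((m : ℝ) - k) + k * ((m : ℝ) - a)) = (m + 1) * m ^ 2 / 2 := by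
  have hreflect := Finset.sum_range_add_sum_range_of_add_reflect
    (fun k : ℕ => a * ((m : ℝ) - k) + k * ((m : ℝ) - a)) (m + 1) ((m : ℝ) ^ 2) fun k hk => by
      simp only [Nat.add_sub_cancel, Nat.cast_sub (Nat.lt_succ_iff.mp hk)]
      ring
  rw [nsmul_eq_mul] at hreflect
  push_cast at hreflect
  linarith

theorem sum_range_kernel_diag (m : ℕ) :
    ∑ i ∈ range (m + 1), ((i : ℝ) * ((m : ℝ) - i) + i * ((m : ℝ) - i)) =
      (m + 1) * m * (m - 1) / 3 := by
  rw [sum_add_distrib, sum_range_mul_sub]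
  push_cast
  ring

/-- with `t(a,b) = a(g-2-b) + b(g-2-a)` and `J_i, J_k` independent
uniform on `{0,…,g-2}`, `t(J_i,J_i)` and `t(J_i,J_k)` are uncorrelated:
`E[t(J_i,J_i)·t(J_i,J_k)] = (g-2)³(g-3)/6 = E[t(J_i,J_i)]·E[t(J_i,J_k)]`. -/
theorem t_kernel_diagonal_uncorrelated (g : ℕ) (hg : 3 ≤ g)
    (t : ℝ → ℝ → ℝ)
    (ht : ∀ a b : ℝ, t a b = a * ((g : ℝ) - 2 - b) + b * ((g : ℝ) - 2 - a)) :
    (∑ i ∈ range (g - 1), ∑ k ∈ range (g - 1),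
        t (i : ℝ) (i : ℝ) * t (i : ℝ) (k : ℝ)) / ((g : ℝ) - 1) ^ 2 =
      ((g : ℝ) - 2) ^ 3 * ((g : ℝ) - 3) / 6 ∧
    ((g : ℝ) - 2) ^ 3 * ((g : ℝ) - 3) / 6 =
      ((∑ i ∈ range (g - 1), t (i : ℝ) (i : ℝ)) / ((g : ℝ) - 1)) *
        ((∑ i ∈ range (g - 1), ∑ k ∈ range (g - 1), t (i : ℝ) (k : ℝ)) /
          ((g : ℝ) - 1) ^ 2) := by
  obtain ⟨m, rfl⟩ : ∃ m, g = m + 2 := ⟨g - 2, by omega⟩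
  have hm : ((m + 2 : ℕ) : ℝ) - 2 = m := by push_cast; ring
  have hn : ((m + 2 : ℕ) : ℝ) - 1 = m + 1 := by push_cast; ring
  have hm3 : ((m + 2 : ℕ) : ℝ) - 3 = m - 1 := by push_cast; ring
  simp only [ht, hm, hn, hm3, show m + 2 - 1 = m + 1 by omega]
  simp only [← mul_sum, sum_range_kernel_row, ← sum_mul, sum_range_kernel_diag, sum_const,
    card_range, nsmul_eq_mul]
  push_cast
  constructor <;> field_simp <;> ring
end
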